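/- If positive integers n, k, ℓ, m, d with n ≥ 5, 1 ≤ d ≤ 9 and m ≥ 2 satisfy (T_n − 1)⋯(T_{n+k-1} − 1)·(T_{n+k} + 1)⋯(T_{n+k+ℓ-1} + 1) = d·(10^m − 1)/9, then k ≤ 6 and ℓ ≤ 7. -/

import Mathlib

/-- The Tribonacci sequence: T 0 = 0, T 1 = T 2 = 1, T (n+3) = T (n+2) + T (n+1) + T n. -/
def trib : ℕ → ℕ
  | 0 => 0
  | 1 => 1
  | 2 => 1
  | n + 3 => trib (n + 2) + trib (n + 1) + trib n

/-!
Modulo 16 the Tribonacci sequence is periodic with period 32, so a finite check shows that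
every product of 7 consecutive factors `T_i - 1`, and every product of 8 consecutive factors
`T_i + 1`, is divisible by 16. On the other side `10 ^ m - 1` is odd, so `16 ∣ d * (10 ^ m - 1)`
would force `16 ∣ d`, impossible for `1 ≤ d ≤ 9`.
-/

theorem trib_add_three (n : ℕ) : trib (n + 3) = trib (n + 2) + trib (n + 1) + trib n := rfl

theorem trib_cast_zmod_sixteen_periodic : Function.Periodic (fun n ↦ (trib n : ZMod 16)) 32 := by
  intro n
  induction n using Nat.strong_induction_on with
  | _ n ih =>
    beta_reduce at ih
    match n with
    | 0 => show (trib 32 : ZMod 16) = trib 0; decide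
    | 1 => show (trib 33 : ZMod 16) = trib 1; decide
    | 2 => show (trib 34 : ZMod 16) = trib 2; decide
    | m + 3 =>
      show (trib (m + 32 + 3) : ZMod 16) = trib (m + 3)
      rw [trib_add_three (m + 32), trib_add_three m, show m + 32 + 2 = m + 2 + 32 by omega,
        show m + 32 + 1 = m + 1 + 32 by omega]
      push_cast
      rw [ih m (by omega), ih (m + 1) (by omega), ih (m + 2) (by omega)]

theorem sixteen_dvd_prod_range_trib_add {j : ℕ} {c : ℤ}
    (h : ∀ r < 32, ∏ i ∈ Finset.range j, ((trib (r + i) : ZMod 16) + c) = 0) (n : ℕ) :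
    (16 : ℤ) ∣ ∏ i ∈ Finset.range j, ((trib (n + i) : ℤ) + c) := by
  apply (ZMod.intCast_zmod_eq_zero_iff_dvd _ 16).mp
  push_cast
  rw [← h (n % 32) (Nat.mod_lt _ (by norm_num))]
  refine Finset.prod_congr rfl fun i _ ↦ ?_
  have hper := trib_cast_zmod_sixteen_periodic.nat_mul (n / 32) (n % 32 + i)
  simp only [Nat.cast_id, show n % 32 + i + n / 32 * 32 = n + i by omega] at hper
  rw [hper]

theorem sixteen_dvd_prod_range_seven_trib_sub_one (n : ℕ) :
    (16 : ℤ) ∣ ∏ i ∈ Finset.range 7, ((trib (n + i) : ℤ) - 1) := by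
  simpa [sub_eq_add_neg] using sixteen_dvd_prod_range_trib_add (c := -1) (by decide) n

theorem sixteen_dvd_prod_range_eight_trib_add_one (n : ℕ) :
    (16 : ℤ) ∣ ∏ i ∈ Finset.range 8, ((trib (n + i) : ℤ) + 1) := by
  simpa using sixteen_dvd_prod_range_trib_add (c := 1) (by decide) n

theorem sixteen_dvd_of_dvd_mul_ten_pow_sub_one {d : ℤ} {m : ℕ} (hm : m ≠ 0)
    (h : 16 ∣ d * (10 ^ m - 1)) : 16 ∣ d := by
  have hodd : Odd ((10 : ℤ) ^ m - 1) := (Int.even_pow.mpr ⟨by decide, hm⟩).sub_odd odd_one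
  have hcop : IsCoprime (2 : ℤ) (10 ^ m - 1) :=
    Int.prime_two.coprime_iff_not_dvd.mpr (Int.not_even_iff_odd.mpr hodd ∘ even_iff_two_dvd.mpr)
  exact (by simpa using hcop.pow_left (m := 4) : IsCoprime (16 : ℤ) _).dvd_of_dvd_mul_right h

theorem lengths_le_of_repdigit_prod_trib_minus_then_plus_general
    (n k ℓ m d : ℕ) (hm : 2 ≤ m)
    (hd1 : 1 ≤ d) (hd9 : d ≤ 9)
    (heq : 9 * ((∏ i ∈ Finset.range k, ((trib (n + i) : ℤ) - 1)) *
      ∏ i ∈ Finset.range ℓ, ((trib (n + k + i) : ℤ) + 1)) = (d : ℤ) * (10 ^ m - 1)) :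
    k ≤ 6 ∧ ℓ ≤ 7 := by
  have hlhs : ¬ (16 : ℤ) ∣ 9 * ((∏ i ∈ Finset.range k, ((trib (n + i) : ℤ) - 1)) *
      ∏ i ∈ Finset.range ℓ, ((trib (n + k + i) : ℤ) + 1)) := by
    rw [heq]
    intro h
    have := Int.le_of_dvd (by omega) (sixteen_dvd_of_dvd_mul_ten_pow_sub_one (by omega) h)
    omega
  constructor
  · by_contra! hk
    refine hlhs (Dvd.dvd.mul_left (Dvd.dvd.mul_right ?_ _) _)
    exact (sixteen_dvd_prod_range_seven_trib_sub_one n).trans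
      (Finset.prod_dvd_prod_of_subset _ _ _ (Finset.range_subset_range.mpr hk))
  · by_contra! hℓ
    refine hlhs (Dvd.dvd.mul_left (Dvd.dvd.mul_left ?_ _) _)
    exact (sixteen_dvd_prod_range_eight_trib_add_one (n + k)).trans
      (Finset.prod_dvd_prod_of_subset _ _ _ (Finset.range_subset_range.mpr hℓ))

/-- If positive integers `n, k, ℓ, m, d` with `n ≥ 5`, `1 ≤ d ≤ 9` and `m ≥ 2` satisfy
`(T_n - 1) ⋯ (T_{n+k-1} - 1) * (T_{n+k} + 1) ⋯ (T_{n+k+ℓ-1} + 1) = d * (10 ^ m - 1) / 9`,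
then `k ≤ 6` and `ℓ ≤ 7`. -/
theorem lengths_le_of_repdigit_prod_trib_minus_then_plus
    (n k ℓ m d : ℕ) (hn : 5 ≤ n) (hk : 0 < k) (hℓ : 0 < ℓ) (hm : 2 ≤ m)
    (hd1 : 1 ≤ d) (hd9 : d ≤ 9)
    (heq : 9 * ((∏ i ∈ Finset.range k, ((trib (n + i) : ℤ) - 1)) *
      ∏ i ∈ Finset.range ℓ, ((trib (n + k + i) : ℤ) + 1)) = (d : ℤ) * (10 ^ m - 1)) :
    k ≤ 6 ∧ ℓ ≤ 7 :=
  lengths_le_of_repdigit_prod_trib_minus_then_plus_general n k ℓ m d hm hd1 hd9 heq
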